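/- For every integer m ≥ 2, as formal power series: ∑_{n≥0} q^{mn} (q^{n+1}; q)_∞ ∑_{j=1}^{m−1} (ζ_m^j q^{n+1}; q)_∞ = ∑_{k≥0} (−1)^k χ_m(k) q^{k(k+1)/2} (q^{k+1}; q)_{m−1}, where ζ_m = e^{2πi/m} and χ_m(k) = m−1 if m | k and −1 otherwise. -/

import Mathlib

open PowerSeries

noncomputable instance : TopologicalSpace (PowerSeries ℂ) :=
  inferInstanceAs (TopologicalSpace ((Unit →₀ ℕ) → ℂ))

/-- The formal variable `q`. -/
noncomputable def q : PowerSeries ℂ := PowerSeries.X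

/-- Finite q-Pochhammer symbol `(a; b)_n = ∏_{i=0}^{n-1} (1 - a bⁱ)`. -/
noncomputable def poch (a b : PowerSeries ℂ) (n : ℕ) : PowerSeries ℂ :=
  ∏ i ∈ Finset.range n, (1 - a * b ^ i)

/-- Infinite q-Pochhammer symbol `(a; b)_∞ = ∏_{i≥0} (1 - a bⁱ)`. -/
noncomputable def pochInf (a b : PowerSeries ℂ) : PowerSeries ℂ :=
  ∏' i : ℕ, (1 - a * b ^ i)

/-- `χₘ(k) = m - 1` if `m ∣ k`, and `-1` otherwise. -/
noncomputable def chim (m k : ℕ) : ℂ := if m ∣ k then (m : ℂ) - 1 else -1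

/-!
Euler's expansion `(c q^{t+1}; q)_∞ = ∑_k (-1)^k c^k q^{k(k+1)/2 + tk} / (q; q)_k` turns the
summand for a fixed `c = ζ^j` into a double series in `n` and `k`. Summing over `n` first,
the inner series is the `q`-beta sum `∑_n q^{(t+1)n} (q^{n+1}; q)_∞ = (q; q)_t` with
`t = m - 1 + k`, and `(q; q)_{m-1+k} / (q; q)_k = (q^{k+1}; q)_{m-1}`. Summing over `j` then
replaces `c^k` by `∑_j ζ^{jk} = χ_m(k)`.

Euler's expansion and the `q`-beta sum both follow from first-order functional equations in `t`.
Every series involved converges `X`-adically, which justifies all rearrangements in the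
coefficientwise topology.
-/

namespace PowerSeries

open Filter Topology WithPiTopology

section Semiring

variable {R : Type*} [Semiring R] [TopologicalSpace R]

theorem summable_of_X_pow_dvd {ι : Type*} {f : ι → R⟦X⟧} (w : ι → ℕ)
    (hw : ∀ d, {i | w i ≤ d}.Finite) (hf : ∀ i, X ^ w i ∣ f i) : Summable f := by
  refine (summable_iff_summable_coeff R).mpr fun d ↦ summable_of_hasFiniteSupport ?_
  refine (hw d).subset fun i hi ↦ ?_
  by_contra hd
  exact hi (X_pow_dvd_iff.mp (hf i) d (not_le.mp hd))

theorem summable_of_X_pow_dvd_self {f : ℕ → R⟦X⟧} (hf : ∀ n, X ^ n ∣ f n) :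
    Summable f :=
  summable_of_X_pow_dvd id Set.finite_Iic hf

end Semiring

theorem multipliable_one_add_of_X_pow_dvd {R : Type*} [CommSemiring R] [TopologicalSpace R]
    {f : ℕ → R⟦X⟧} (hf : ∀ n, X ^ n ∣ f n) : Multipliable (1 + f ·) := by
  refine multipliable_one_add_of_tendsto_order_atTop_nhds_top R <|
    ENat.tendsto_nhds_top_iff_natCast_lt.mpr fun d ↦
      eventually_atTop.mpr ⟨d + 1, fun n hn ↦ ?_⟩
  exact (ENat.natCast_lt_natCast.mpr hn).trans_le (nat_le_order _ _ (X_pow_dvd_iff.mp (hf n)))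

section CommRing

variable {R : Type*} [CommRing R]

theorem eq_zero_of_eq_mul_succ {D u : ℕ → R⟦X⟧} (hD : ∀ t, D t = u t * D (t + 1))
    (h : ∀ t, X ^ t ∣ D t) (t : ℕ) : D t = 0 := by
  have descend : ∀ N k t, X ^ N ∣ D (t + k) → X ^ N ∣ D t := by
    intro N k
    induction k with
    | zero => exact fun t ht ↦ ht
    | succ k ih =>
      exact fun t ht ↦ hD t ▸ (ih (t + 1) (by rwa [Nat.add_right_comm])).mul_left _
  ext d
  exact X_pow_dvd_iff.mp (descend (d + 1) (d + 1) t ((pow_dvd_pow X (by omega)).trans (h _))) d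
    (by omega)

variable [TopologicalSpace R]

theorem tendsto_of_X_pow_dvd_sub {a : ℕ → R⟦X⟧} {L : R⟦X⟧}
    (h : ∀ n, X ^ n ∣ a n - L) : Tendsto a atTop (𝓝 L) := by
  refine (tendsto_iff_coeff_tendsto R a atTop L).mpr fun d ↦
    tendsto_atTop_of_eventually_const fun n (hn : d + 1 ≤ n) ↦ ?_
  rw [← sub_eq_zero, ← map_sub]
  exact X_pow_dvd_iff.mp (h n) d (by omega)

theorem isClosed_setOf_X_pow_dvd_sub [T2Space R] (s : ℕ) (a : R⟦X⟧) :
    IsClosed {f : R⟦X⟧ | X ^ s ∣ f - a} := by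
  simp only [X_pow_dvd_iff, map_sub, sub_eq_zero, Set.ofPred_forall]
  exact isClosed_iInter fun d ↦ isClosed_iInter fun _ ↦
    isClosed_eq (continuous_coeff R d) continuous_const

theorem X_pow_dvd_tsum [T2Space R] {ι : Type*} {f : ι → R⟦X⟧} {s : ℕ}
    (hf : ∀ i, X ^ s ∣ f i) : X ^ s ∣ ∑' i, f i := by
  by_cases h : Summable f
  · simpa using (isClosed_setOf_X_pow_dvd_sub s 0).mem_of_tendsto h.hasSum
      (.of_forall fun t ↦ by simpa using Finset.dvd_sum fun i _ ↦ hf i)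
  · simp [tsum_eq_zero_of_not_summable h]

theorem X_pow_dvd_tprod_sub_one [T2Space R] {ι : Type*} {f : ι → R⟦X⟧} {s : ℕ}
    (hf : ∀ i, X ^ s ∣ f i - 1) : X ^ s ∣ ∏' i, f i - 1 := by
  by_cases h : Multipliable f
  · refine (isClosed_setOf_X_pow_dvd_sub s 1).mem_of_tendsto h.hasProd (.of_forall fun t ↦ ?_)
    refine Finset.prod_induction f (fun g ↦ X ^ s ∣ g - 1) (fun a b ha hb ↦ ?_) (by simp)
      fun i _ ↦ hf i
    have : a * b - 1 = (a - 1) * b + (b - 1) := by ring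
    simpa [this] using dvd_add (ha.mul_right b) hb
  · simp [tprod_eq_one_of_not_multipliable h]

end CommRing

end PowerSeries

theorem IsPrimitiveRoot.sum_Icc_pow_pow {K : Type*} [CommRing K] [IsDomain K] {ζ : K} {m : ℕ}
    (hζ : IsPrimitiveRoot ζ m) (hm : m ≠ 0) (k : ℕ) :
    ∑ j ∈ Finset.Icc 1 (m - 1), (ζ ^ j) ^ k = if m ∣ k then (m : K) - 1 else -1 := by
  have hsplit : ∑ j ∈ Finset.range m, (ζ ^ k) ^ j =
      1 + ∑ j ∈ Finset.Icc 1 (m - 1), (ζ ^ j) ^ k := by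
    have hIco : Finset.Ico 1 m = Finset.Icc 1 (m - 1) := by
      ext
      simp only [Finset.mem_Ico, Finset.mem_Icc]
      omega
    rw [Finset.range_eq_Ico, Finset.sum_eq_sum_Ico_succ_bot (Nat.pos_of_ne_zero hm), pow_zero,
      hIco]
    simp_rw [← pow_mul, mul_comm k]
  split_ifs with hk
  · rw [(hζ.pow_eq_one_iff_dvd k).mpr hk] at hsplit
    simp only [one_pow, Finset.sum_const, Finset.card_range, nsmul_eq_mul, mul_one] at hsplit
    linear_combination -hsplit
  · have hne : ζ ^ k - 1 ≠ 0 := sub_ne_zero.mpr fun h ↦ hk ((hζ.pow_eq_one_iff_dvd k).mp h)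
    have hgeom : ∑ j ∈ Finset.range m, (ζ ^ k) ^ j = 0 := by
      refine (mul_eq_zero.mp ?_).resolve_right hne
      rw [geom_sum_mul, ← pow_mul, mul_comm, pow_mul, hζ.pow_eq_one, one_pow, sub_self]
    linear_combination hsplit.symm.trans hgeom

namespace Nat

theorem le_mul_succ_div_two (k : ℕ) : k ≤ k * (k + 1) / 2 := by
  rcases k with _ | k
  · simp
  · exact (Nat.le_div_iff_mul_le two_pos).mpr (Nat.mul_le_mul_left _ (by omega))

theorem succ_mul_succ_succ_div_two (k : ℕ) :
    (k + 1) * (k + 1 + 1) / 2 = k * (k + 1) / 2 + (k + 1) := by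
  rw [show (k + 1) * (k + 1 + 1) = k * (k + 1) + (k + 1) * 2 by ring,
    Nat.add_mul_div_right _ _ two_pos]

end Nat

noncomputable instance : T3Space (PowerSeries ℂ) :=
  inferInstanceAs (T3Space ((Unit →₀ ℕ) → ℂ))

noncomputable instance : IsTopologicalRing (PowerSeries ℂ) :=
  PowerSeries.WithPiTopology.instIsTopologicalRing ℂ

open PowerSeries Finset

theorem q_eq_X : q = X := rfl

theorem multipliable_one_sub_mul_q_pow (a : PowerSeries ℂ) :
    Multipliable fun i ↦ 1 - a * q ^ i := by
  have := multipliable_one_add_of_X_pow_dvd fun i ↦ (dvd_mul_left (X ^ i) a).neg_right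
  simp only [← sub_eq_add_neg] at this
  exact this

theorem pochInf_eq_one_sub_mul (a : PowerSeries ℂ) :
    pochInf a q = (1 - a) * pochInf (a * q) q := by
  have h : Multipliable fun i ↦ 1 - a * q ^ (i + 1) := by
    simpa only [pow_succ', mul_assoc] using multipliable_one_sub_mul_q_pow (a * q)
  rw [pochInf, tprod_eq_zero_mul' (f := fun i ↦ 1 - a * q ^ i) h]
  simp only [pochInf, pow_zero, mul_one, pow_succ', mul_assoc]

theorem X_pow_dvd_pochInf_sub_one {a : PowerSeries ℂ} {s : ℕ} (ha : X ^ s ∣ a) :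
    X ^ s ∣ pochInf a q - 1 :=
  X_pow_dvd_tprod_sub_one fun i ↦ by simpa using (ha.mul_right (q ^ i)).neg_right

theorem pochInf_one : pochInf 1 q = 0 := by
  simpa using pochInf_eq_one_sub_mul 1

theorem poch_q_succ (k : ℕ) : poch q q (k + 1) = poch q q k * (1 - q ^ (k + 1)) := by
  rw [poch, prod_range_succ, ← pow_succ']; rfl

theorem poch_q_mul_poch (k n : ℕ) : poch q q k * poch (q ^ (k + 1)) q n = poch q q (k + n) := by
  simp only [poch, prod_range_add, ← pow_succ', ← pow_add, add_right_comm]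

theorem constantCoeff_poch_q (k : ℕ) : constantCoeff (poch q q k) = 1 := by
  simp [poch, q_eq_X]

theorem poch_q_ne_zero (k : ℕ) : poch q q k ≠ 0 := fun h ↦ by
  simpa [h] using constantCoeff_poch_q k

theorem inv_poch_q_mul (k : ℕ) : (poch q q k)⁻¹ * poch q q k = 1 :=
  PowerSeries.inv_mul_cancel _ (by simp [constantCoeff_poch_q])

noncomputable def eulerCoeff (c : ℂ) (k : ℕ) : PowerSeries ℂ :=
  (-1) ^ k * C (c ^ k) * q ^ (k * (k + 1) / 2) * (poch q q k)⁻¹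

theorem eulerCoeff_zero (c : ℂ) : eulerCoeff c 0 = 1 := by
  simp [eulerCoeff, poch]

theorem eulerCoeff_mul_poch (c : ℂ) (k : ℕ) :
    eulerCoeff c k * poch q q k = (-1) ^ k * C (c ^ k) * q ^ (k * (k + 1) / 2) := by
  rw [eulerCoeff, mul_assoc, inv_poch_q_mul, mul_one]

theorem eulerCoeff_succ_mul (c : ℂ) (k : ℕ) :
    eulerCoeff c (k + 1) * (1 - q ^ (k + 1)) = -(C c * q ^ (k + 1)) * eulerCoeff c k := by
  apply mul_right_cancel₀ (poch_q_ne_zero k)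
  rw [mul_assoc, mul_comm (1 - _), ← poch_q_succ, eulerCoeff_mul_poch,
    mul_assoc (-(C c * q ^ (k + 1))), eulerCoeff_mul_poch, Nat.succ_mul_succ_succ_div_two]
  simp only [pow_add, pow_succ, map_mul]
  ring

theorem X_pow_dvd_eulerCoeff (c : ℂ) (k : ℕ) : X ^ k ∣ eulerCoeff c k :=
  ((pow_dvd_pow X (Nat.le_mul_succ_div_two k)).mul_left _).mul_right _

theorem summable_eulerCoeff_mul (c : ℂ) (t : ℕ) :
    Summable fun k ↦ eulerCoeff c k * q ^ (t * k) :=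
  summable_of_X_pow_dvd_self fun k ↦ (X_pow_dvd_eulerCoeff c k).mul_right _

theorem tsum_eulerCoeff_mul_eq_one_sub_mul (c : ℂ) (t : ℕ) :
    ∑' k, eulerCoeff c k * q ^ (t * k) =
      (1 - C c * q ^ (t + 1)) * ∑' k, eulerCoeff c k * q ^ ((t + 1) * k) := by
  have hdiff : Summable fun k ↦ eulerCoeff c k * q ^ (t * k) * (1 - q ^ k) :=
    summable_of_X_pow_dvd_self fun k ↦ ((X_pow_dvd_eulerCoeff c k).mul_right _).mul_right _
  have key : ∑' k, eulerCoeff c k * q ^ (t * k) - ∑' k, eulerCoeff c k * q ^ ((t + 1) * k) =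
      -(C c * q ^ (t + 1)) * ∑' k, eulerCoeff c k * q ^ ((t + 1) * k) := by
    rw [← (summable_eulerCoeff_mul c t).tsum_sub (summable_eulerCoeff_mul c (t + 1)),
      ← (summable_eulerCoeff_mul c (t + 1)).tsum_mul_left]
    calc ∑' k, (eulerCoeff c k * q ^ (t * k) - eulerCoeff c k * q ^ ((t + 1) * k))
        = ∑' k, eulerCoeff c k * q ^ (t * k) * (1 - q ^ k) := by
          refine tsum_congr fun k ↦ ?_
          rw [add_mul, one_mul, pow_add]
          ring
      _ = ∑' k, eulerCoeff c (k + 1) * (1 - q ^ (k + 1)) * q ^ (t * (k + 1)) := by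
          rw [hdiff.tsum_eq_zero_add]
          simp only [pow_zero, sub_self, mul_zero, zero_add]
          exact tsum_congr fun k ↦ by ring
      _ = ∑' k, -(C c * q ^ (t + 1)) * (eulerCoeff c k * q ^ ((t + 1) * k)) := by
          refine tsum_congr fun k ↦ ?_
          rw [eulerCoeff_succ_mul, mul_add_one, add_mul, pow_add]
          ring
  linear_combination key

theorem X_pow_dvd_tsum_eulerCoeff_mul_sub_one (c : ℂ) (t : ℕ) :
    X ^ t ∣ ∑' k, eulerCoeff c k * q ^ (t * k) - 1 := by
  rw [(summable_eulerCoeff_mul c t).tsum_eq_zero_add, eulerCoeff_zero, mul_zero, pow_zero,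
    mul_one, add_sub_cancel_left]
  exact X_pow_dvd_tsum fun k ↦ (pow_dvd_pow X (Nat.le_mul_of_pos_right t k.succ_pos)).mul_left _

theorem pochInf_C_mul_q_pow_eq_tsum (c : ℂ) (t : ℕ) :
    pochInf (C c * q ^ (t + 1)) q = ∑' k, eulerCoeff c k * q ^ (t * k) := by
  refine sub_eq_zero.mp <| eq_zero_of_eq_mul_succ
    (D := fun t ↦ pochInf (C c * q ^ (t + 1)) q - ∑' k, eulerCoeff c k * q ^ (t * k))
    (u := fun t ↦ 1 - C c * q ^ (t + 1))
    (fun t ↦ ?_) (fun t ↦ ?_) t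
  · rw [mul_sub, ← tsum_eulerCoeff_mul_eq_one_sub_mul, pochInf_eq_one_sub_mul, mul_assoc,
      ← pow_succ]
  · have h := dvd_sub (X_pow_dvd_pochInf_sub_one (a := C c * q ^ (t + 1))
      ((pow_dvd_pow X t.le_succ).mul_left (C c))) (X_pow_dvd_tsum_eulerCoeff_mul_sub_one c t)
    rwa [sub_sub_sub_cancel_right] at h

theorem summable_q_pow_mul_pochInf (t : ℕ) :
    Summable fun n ↦ q ^ ((t + 1) * n) * pochInf (q ^ (n + 1)) q :=
  summable_of_X_pow_dvd_self fun n ↦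
    (pow_dvd_pow X (Nat.le_mul_of_pos_left n t.succ_pos)).mul_right _

theorem q_pow_mul_pochInf_succ (n : ℕ) :
    q ^ n * pochInf (q ^ (n + 1)) q = pochInf (q ^ (n + 1)) q - pochInf (q ^ n) q := by
  rw [pochInf_eq_one_sub_mul (q ^ n), ← pow_succ]
  ring

theorem tsum_q_pow_mul_pochInf_zero : ∑' n, q ^ n * pochInf (q ^ (n + 1)) q = 1 := by
  have hs := summable_q_pow_mul_pochInf 0
  simp only [zero_add, one_mul] at hs
  refine (hs.hasSum_iff_tendsto_nat.mpr ?_).tsum_eq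
  simp_rw [q_pow_mul_pochInf_succ, Finset.sum_range_sub (fun n ↦ pochInf (q ^ n) q), pow_zero,
    pochInf_one, sub_zero]
  exact tendsto_of_X_pow_dvd_sub fun n ↦ X_pow_dvd_pochInf_sub_one dvd_rfl

theorem tsum_q_pow_mul_pochInf_succ (t : ℕ) :
    ∑' n, q ^ ((t + 2) * n) * pochInf (q ^ (n + 1)) q =
      (1 - q ^ (t + 1)) * ∑' n, q ^ ((t + 1) * n) * pochInf (q ^ (n + 1)) q := by
  have hshift : Summable fun n ↦ q ^ ((t + 1) * n) * pochInf (q ^ n) q :=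
    summable_of_X_pow_dvd_self fun n ↦
      (pow_dvd_pow X (Nat.le_mul_of_pos_left n t.succ_pos)).mul_right _
  have key : ∑' n, q ^ ((t + 1) * n) * pochInf (q ^ (n + 1)) q -
      ∑' n, q ^ ((t + 2) * n) * pochInf (q ^ (n + 1)) q =
        q ^ (t + 1) * ∑' n, q ^ ((t + 1) * n) * pochInf (q ^ (n + 1)) q := by
    rw [← (summable_q_pow_mul_pochInf t).tsum_sub (summable_q_pow_mul_pochInf (t + 1)),
      ← (summable_q_pow_mul_pochInf t).tsum_mul_left]
    calc ∑' n, (q ^ ((t + 1) * n) * pochInf (q ^ (n + 1)) q -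
          q ^ ((t + 2) * n) * pochInf (q ^ (n + 1)) q)
        = ∑' n, q ^ ((t + 1) * n) * pochInf (q ^ n) q := by
          refine tsum_congr fun n ↦ ?_
          rw [pochInf_eq_one_sub_mul (q ^ n), ← pow_succ,
            show (t + 2) * n = (t + 1) * n + n by ring, pow_add]
          ring
      _ = ∑' n, q ^ (t + 1) * (q ^ ((t + 1) * n) * pochInf (q ^ (n + 1)) q) := by
          rw [hshift.tsum_eq_zero_add, pow_zero, pochInf_one, mul_zero, zero_add]
          exact tsum_congr fun n ↦ by rw [mul_add_one, pow_add]; ring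
  linear_combination -key

theorem tsum_q_pow_mul_pochInf (t : ℕ) :
    ∑' n, q ^ ((t + 1) * n) * pochInf (q ^ (n + 1)) q = poch q q t := by
  induction t with
  | zero => simpa [poch] using tsum_q_pow_mul_pochInf_zero
  | succ t ih => rw [tsum_q_pow_mul_pochInf_succ, ih, poch_q_succ, mul_comm]

theorem tsum_q_pow_mul_pochInf_mul_pochInf (m : ℕ) (c : ℂ) :
    ∑' n, q ^ ((m + 1) * n) * pochInf (q ^ (n + 1)) q * pochInf (C c * q ^ (n + 1)) q =
      ∑' k, (-1) ^ k * C (c ^ k) * q ^ (k * (k + 1) / 2) * poch (q ^ (k + 1)) q m := by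
  let f (n k : ℕ) : PowerSeries ℂ :=
    eulerCoeff c k * (q ^ ((m + k + 1) * n) * pochInf (q ^ (n + 1)) q)
  have hdvd (n k : ℕ) : X ^ (n + k) ∣ f n k := by
    rw [pow_add, mul_comm]
    exact mul_dvd_mul (X_pow_dvd_eulerCoeff c k)
      ((pow_dvd_pow X (Nat.le_mul_of_pos_left n (by omega))).mul_right _)
  have hf : Summable (Function.uncurry f) :=
    summable_of_X_pow_dvd (fun p ↦ p.1 + p.2) (fun d ↦ ((Set.finite_Iic d).prod
      (Set.finite_Iic d)).subset fun p (hp : p.1 + p.2 ≤ d) ↦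
        ⟨show p.1 ≤ d by omega, show p.2 ≤ d by omega⟩) fun p ↦ hdvd p.1 p.2
  calc _ = ∑' n, ∑' k, f n k := by
        refine tsum_congr fun n ↦ ?_
        rw [pochInf_C_mul_q_pow_eq_tsum, ← (summable_eulerCoeff_mul c n).tsum_mul_left]
        refine tsum_congr fun k ↦ ?_
        simp only [f]
        rw [show (m + k + 1) * n = (m + 1) * n + n * k by ring, pow_add]
        ring
    _ = ∑' k, ∑' n, f n k :=
        (hf.tsum_comm'
          (fun n ↦ summable_of_X_pow_dvd_self fun k ↦
            (pow_dvd_pow X le_add_self).trans (hdvd n k))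
          fun k ↦ summable_of_X_pow_dvd_self fun n ↦
            (pow_dvd_pow X le_self_add).trans (hdvd n k)).symm
    _ = _ := by
        refine tsum_congr fun k ↦ ?_
        rw [(summable_q_pow_mul_pochInf (m + k)).tsum_mul_left, tsum_q_pow_mul_pochInf, add_comm,
          ← poch_q_mul_poch, ← mul_assoc, eulerCoeff_mul_poch]

/-- Equation (4.2): `∑_{n≥0} q^{mn}(q^{n+1};q)_∞ ∑_{j=1}^{m-1}(ζₘʲq^{n+1};q)_∞
= ∑_{k≥0} (-1)ᵏ χₘ(k) q^{k(k+1)/2} (q^{k+1};q)_{m-1}`. -/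
theorem eps_m_eval (m : ℕ) (hm : 2 ≤ m) :
    (∑' n : ℕ, q ^ (m * n) * pochInf (q ^ (n + 1)) q *
      ∑ j ∈ Finset.Icc 1 (m - 1),
        pochInf (PowerSeries.C (Complex.exp (2 * Real.pi * Complex.I / m) ^ j) *
          q ^ (n + 1)) q) =
    ∑' k : ℕ, (-1 : PowerSeries ℂ) ^ k * PowerSeries.C (chim m k) *
      q ^ (k * (k + 1) / 2) * poch (q ^ (k + 1)) q (m - 1) := by
  set ζ := Complex.exp (2 * Real.pi * Complex.I / m)
  have hζ : IsPrimitiveRoot ζ m := Complex.isPrimitiveRoot_exp m (by omega)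
  obtain ⟨m, rfl⟩ : ∃ m', m = m' + 1 := ⟨m - 1, by omega⟩
  have hrhs (c : ℂ) : Summable fun k ↦
      (-1) ^ k * C (c ^ k) * q ^ (k * (k + 1) / 2) * poch (q ^ (k + 1)) q m :=
    summable_of_X_pow_dvd_self fun k ↦
      ((pow_dvd_pow X (Nat.le_mul_succ_div_two k)).mul_left _).mul_right _
  have hlhs (c : ℂ) : Summable fun n ↦
      q ^ ((m + 1) * n) * pochInf (q ^ (n + 1)) q * pochInf (C c * q ^ (n + 1)) q :=
    summable_of_X_pow_dvd_self fun n ↦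
      ((pow_dvd_pow X (Nat.le_mul_of_pos_left n m.succ_pos)).mul_right _).mul_right _
  simp only [Nat.add_sub_cancel, mul_sum]
  rw [Summable.tsum_finsetSum fun j _ ↦ hlhs (ζ ^ j)]
  simp only [tsum_q_pow_mul_pochInf_mul_pochInf]
  rw [← Summable.tsum_finsetSum fun j _ ↦ hrhs (ζ ^ j)]
  refine tsum_congr fun k ↦ ?_
  rw [chim, ← hζ.sum_Icc_pow_pow m.succ_ne_zero, Nat.add_sub_cancel, map_sum, mul_sum, sum_mul,
    sum_mul]
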